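/- Suppose f : [0,1]² → ℝ is continuous with f(x,y) > 0 for all (x,y), and λ : [0,1] → ℝ is nonnegative and integrable. If there exists ρ* ∈ (0,1) such that ρ̄ⁿ ≤ ρ* for every n ∈ ℕ, then there exists n ∈ ℕ with ρⁿ < 1. -/

import Mathlib

open MeasureTheory Set Finset

/-- Integral of the arrival rate function over the `h`-th dyadic subinterval of
`[0,1]` at level `n`: `λ^{(n)}_h = ∫_{h/2ⁿ}^{(h+1)/2ⁿ} λ(x) dx`. -/
noncomputable def lamDyadic (lam : ℝ → ℝ) (n : ℕ) (h : Fin (2 ^ n)) : ℝ :=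
  ∫ x in (((h : ℕ) : ℝ) / 2 ^ n)..((((h : ℕ) : ℝ) + 1) / 2 ^ n), lam x

/-- Minimum of `f` on the dyadic square, realized as the `sInf` of the image. -/
noncomputable def muStarDyadic (f : ℝ × ℝ → ℝ) (n : ℕ) (h m : Fin (2 ^ n)) : ℝ :=
  sInf (f '' (Icc (((h : ℕ) : ℝ) / 2 ^ n) ((((h : ℕ) : ℝ) + 1) / 2 ^ n) ×ˢ
              Icc (((m : ℕ) : ℝ) / 2 ^ n) ((((m : ℕ) : ℝ) + 1) / 2 ^ n)))

/-- Maximum of `f` on the dyadic square, realized as the `sSup` of the image. -/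
noncomputable def muHatDyadic (f : ℝ × ℝ → ℝ) (n : ℕ) (h m : Fin (2 ^ n)) : ℝ :=
  sSup (f '' (Icc (((h : ℕ) : ℝ) / 2 ^ n) ((((h : ℕ) : ℝ) + 1) / 2 ^ n) ×ˢ
              Icc (((m : ℕ) : ℝ) / 2 ^ n) ((((m : ℕ) : ℝ) + 1) / 2 ^ n)))

/-- A matrix with entries in `[0,1]` and unit row sums. -/
def IsStochastic {H M : ℕ} (p : Fin H → Fin M → ℝ) : Prop :=
  (∀ h m, 0 ≤ p h m ∧ p h m ≤ 1) ∧ ∀ h, ∑ m, p h m = 1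

/-- `ρⁿ`: infimum over `2ⁿ×2ⁿ` stochastic matrices of the worst-case load with
minimal service rates. -/
noncomputable def rhoStar (f : ℝ × ℝ → ℝ) (lam : ℝ → ℝ) (n : ℕ) : ℝ :=
  sInf { r : ℝ | ∃ p : Fin (2 ^ n) → Fin (2 ^ n) → ℝ, IsStochastic p ∧
    r = ⨆ m : Fin (2 ^ n), ∑ h : Fin (2 ^ n),
      (2 ^ n : ℝ) * lamDyadic lam n h * p h m / muStarDyadic f n h m }

/-- `ρ̄ⁿ`: infimum over `2ⁿ×2ⁿ` stochastic matrices of the worst-case load with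
maximal service rates. -/
noncomputable def rhoBar (f : ℝ × ℝ → ℝ) (lam : ℝ → ℝ) (n : ℕ) : ℝ :=
  sInf { r : ℝ | ∃ p : Fin (2 ^ n) → Fin (2 ^ n) → ℝ, IsStochastic p ∧
    r = ⨆ m : Fin (2 ^ n), ∑ h : Fin (2 ^ n),
      (2 ^ n : ℝ) * lamDyadic lam n h * p h m / muHatDyadic f n h m }

/-! Dividing by the minimal rates `μ*` instead of the maximal rates `μ̂` increases every dyadic
load by at most the factor `max μ̂ / μ*` over the squares of the partition, and this factor tends
to `1` because `log f` is uniformly continuous on the compact unit square. Hence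
`ρⁿ ≤ K ρ̄ⁿ ≤ K ρ*` for large `n`, for any `K > 1`, and `K ρ* < 1` for `K` close to `1`. -/

lemma exists_forall_dist_lt_le_mul {X : Type*} [PseudoMetricSpace X] {Q : Set X}
    (hQ : IsCompact Q) {f : X → ℝ} (hf : ContinuousOn f Q) (hpos : ∀ z ∈ Q, 0 < f z)
    {K : ℝ} (hK : 1 < K) :
    ∃ ε > 0, ∀ x ∈ Q, ∀ y ∈ Q, dist x y < ε → f x ≤ K * f y := by
  have hlog : ContinuousOn (fun z => Real.log (f z)) Q :=
    hf.log fun z hz => (hpos z hz).ne'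
  obtain ⟨ε, hε, hεlog⟩ := Metric.uniformContinuousOn_iff.1
    (hQ.uniformContinuousOn_of_continuous hlog) (Real.log K) (Real.log_pos hK)
  refine ⟨ε, hε, fun x hx y hy hxy => ?_⟩
  have hlt : Real.log (f x) - Real.log (f y) < Real.log K :=
    (abs_lt.1 (Real.dist_eq _ _ ▸ hεlog x hx y hy hxy)).2
  rw [← Real.log_le_log_iff (hpos x hx) (mul_pos (by linarith) (hpos y hy)),
    Real.log_mul (by positivity) (hpos y hy).ne']
  linarith

lemma sSup_image_le_mul_sInf_image {X : Type*} {s : Set X} (hs : s.Nonempty) {f : X → ℝ}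
    {K : ℝ} (hK : 0 < K) (hsK : ∀ x ∈ s, ∀ y ∈ s, f x ≤ K * f y) :
    sSup (f '' s) ≤ K * sInf (f '' s) := by
  refine csSup_le (hs.image f) (forall_mem_image.2 fun x hx => ?_)
  rw [← div_le_iff₀' hK]
  exact le_csInf (hs.image f) (forall_mem_image.2 fun y hy => (div_le_iff₀' hK).2 (hsK x hx y hy))

lemma IsCompact.sInf_image_pos {X : Type*} [TopologicalSpace X] {s : Set X} (hs : IsCompact s)
    (hne : s.Nonempty) {f : X → ℝ} (hf : ContinuousOn f s) (hpos : ∀ z ∈ s, 0 < f z) :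
    0 < sInf (f '' s) := by
  obtain ⟨z, hz, hfz⟩ := (hs.image_of_continuousOn hf).sInf_mem (hne.image f)
  exact hfz ▸ hpos z hz

lemma IsCompact.sSup_image_pos {X : Type*} [TopologicalSpace X] {s : Set X} (hs : IsCompact s)
    (hne : s.Nonempty) {f : X → ℝ} (hf : ContinuousOn f s) (hpos : ∀ z ∈ s, 0 < f z) :
    0 < sSup (f '' s) := by
  obtain ⟨z, hz, hfz⟩ := (hs.image_of_continuousOn hf).sSup_mem (hne.image f)
  exact hfz ▸ hpos z hz

lemma sInf_le_mul_sInf {S T : Set ℝ} {K : ℝ} (hK : 0 ≤ K) (hS : BddBelow S) (hT : T.Nonempty)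
    (hST : ∀ t ∈ T, ∃ s ∈ S, s ≤ K * t) : sInf S ≤ K * sInf T := by
  rw [← smul_eq_mul, ← Real.sInf_smul_of_nonneg hK]
  refine le_csInf (hT.smul_set) ?_
  rintro _ ⟨t, ht, rfl⟩
  obtain ⟨s, hs, hst⟩ := hST t ht
  exact (csInf_le hS hs).trans hst

section Load

variable {ι κ : Type*} [Fintype ι]

/-- `rhoStar f lam n` and `rhoBar f lam n` are infima of `maxLoad (2ⁿ λ⁽ⁿ⁾) p μ` over stochastic
`p`, with `μ = μ*⁽ⁿ⁾` and `μ = μ̂⁽ⁿ⁾` respectively. -/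
noncomputable def maxLoad (a : ι → ℝ) (p μ : ι → κ → ℝ) : ℝ :=
  ⨆ m, ∑ h, a h * p h m / μ h m

lemma maxLoad_nonneg {a : ι → ℝ} {p μ : ι → κ → ℝ} (ha : ∀ h, 0 ≤ a h)
    (hp : ∀ h m, 0 ≤ p h m) (hμ : ∀ h m, 0 ≤ μ h m) : 0 ≤ maxLoad a p μ :=
  Real.iSup_nonneg fun m => sum_nonneg fun h _ => div_nonneg (mul_nonneg (ha h) (hp h m)) (hμ h m)

lemma maxLoad_le_mul_maxLoad [Finite κ] [Nonempty κ] {a : ι → ℝ} {p μ ν : ι → κ → ℝ} {K : ℝ}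
    (hK : 0 ≤ K) (ha : ∀ h, 0 ≤ a h) (hp : ∀ h m, 0 ≤ p h m) (hμ : ∀ h m, 0 < μ h m)
    (hν : ∀ h m, 0 < ν h m) (hνμ : ∀ h m, ν h m ≤ K * μ h m) :
    maxLoad a p μ ≤ K * maxLoad a p ν := by
  refine ciSup_le fun m => ?_
  calc ∑ h, a h * p h m / μ h m ≤ ∑ h, K * (a h * p h m / ν h m) := by
        refine sum_le_sum fun h _ => ?_
        have hap : 0 ≤ a h * p h m := mul_nonneg (ha h) (hp h m)
        rw [mul_div_assoc', div_le_div_iff₀ (hμ h m) (hν h m)]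
        linear_combination mul_le_mul_of_nonneg_left (hνμ h m) hap
    _ ≤ K * maxLoad a p ν := by
        rw [← mul_sum]
        exact mul_le_mul_of_nonneg_left
          (le_ciSup (f := fun m => ∑ h, a h * p h m / ν h m) (Finite.bddAbove_range _) m) hK

end Load

lemma isStochastic_const_inv {H M : ℕ} (hM : 0 < M) :
    IsStochastic (fun (_ : Fin H) (_ : Fin M) => (M : ℝ)⁻¹) := by
  refine ⟨fun _ _ => ⟨by positivity, inv_le_one_of_one_le₀ (by exact_mod_cast hM)⟩, fun _ => ?_⟩
  simp [hM.ne']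

def dyadicInterval (n k : ℕ) : Set ℝ := Icc ((k : ℝ) / 2 ^ n) (((k : ℝ) + 1) / 2 ^ n)

lemma dyadicInterval_nonempty (n k : ℕ) : (dyadicInterval n k).Nonempty :=
  nonempty_Icc.2 (by gcongr; linarith)

lemma dyadicInterval_subset_Icc {n k : ℕ} (hk : k < 2 ^ n) : dyadicInterval n k ⊆ Icc 0 1 := by
  refine Icc_subset_Icc (by positivity) ?_
  rw [div_le_one (by positivity)]
  exact_mod_cast hk

lemma dyadicInterval_prod_subset {n : ℕ} (h m : Fin (2 ^ n)) :
    dyadicInterval n h ×ˢ dyadicInterval n m ⊆ Icc (0:ℝ) 1 ×ˢ Icc (0:ℝ) 1 :=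
  prod_mono (dyadicInterval_subset_Icc h.isLt) (dyadicInterval_subset_Icc m.isLt)

lemma dist_le_of_mem_dyadicInterval {n k : ℕ} {x y : ℝ} (hx : x ∈ dyadicInterval n k)
    (hy : y ∈ dyadicInterval n k) : dist x y ≤ (1 / 2) ^ n := by
  convert Real.dist_le_of_mem_Icc hx hy using 1
  rw [one_div_pow, ← sub_div]
  ring

section Dyadic

variable {f : ℝ × ℝ → ℝ} {lam : ℝ → ℝ} {n : ℕ}

lemma lamDyadic_nonneg (hlam : ∀ x ∈ Icc (0:ℝ) 1, 0 ≤ lam x) (h : Fin (2 ^ n)) :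
    0 ≤ lamDyadic lam n h :=
  intervalIntegral.integral_nonneg (nonempty_Icc.1 (dyadicInterval_nonempty n h))
    fun x hx => hlam x (dyadicInterval_subset_Icc h.isLt hx)

variable (hf : ContinuousOn f (Icc (0:ℝ) 1 ×ˢ Icc (0:ℝ) 1))
  (hfpos : ∀ z ∈ Icc (0:ℝ) 1 ×ˢ Icc (0:ℝ) 1, 0 < f z)
include hf hfpos

lemma eventually_muHatDyadic_le_mul_muStarDyadic {K : ℝ} (hK : 1 < K) :
    ∀ᶠ n in Filter.atTop, ∀ h m : Fin (2 ^ n), muHatDyadic f n h m ≤ K * muStarDyadic f n h m := by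
  obtain ⟨ε, hε, hεf⟩ :=
    exists_forall_dist_lt_le_mul (isCompact_Icc.prod isCompact_Icc) hf hfpos hK
  have hsmall : ∀ᶠ n in Filter.atTop, (1 / 2 : ℝ) ^ n < ε :=
    (tendsto_pow_atTop_nhds_zero_of_lt_one (by norm_num) (by norm_num)).eventually (gt_mem_nhds hε)
  filter_upwards [hsmall] with n hn h m
  have hsub := dyadicInterval_prod_subset h m
  refine sSup_image_le_mul_sInf_image
    ((dyadicInterval_nonempty n h).prod (dyadicInterval_nonempty n m)) (by linarith)
    fun x hx y hy => hεf x (hsub hx) y (hsub hy) ?_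
  rw [Prod.dist_eq]
  exact (max_le (dist_le_of_mem_dyadicInterval hx.1 hy.1)
    (dist_le_of_mem_dyadicInterval hx.2 hy.2)).trans_lt hn

lemma muStarDyadic_pos (h m : Fin (2 ^ n)) : 0 < muStarDyadic f n h m := by
  have hsub := dyadicInterval_prod_subset h m
  exact (isCompact_Icc.prod isCompact_Icc).sInf_image_pos
    ((dyadicInterval_nonempty n h).prod (dyadicInterval_nonempty n m)) (hf.mono hsub)
    fun z hz => hfpos z (hsub hz)

lemma muHatDyadic_pos (h m : Fin (2 ^ n)) : 0 < muHatDyadic f n h m := by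
  have hsub := dyadicInterval_prod_subset h m
  exact (isCompact_Icc.prod isCompact_Icc).sSup_image_pos
    ((dyadicInterval_nonempty n h).prod (dyadicInterval_nonempty n m)) (hf.mono hsub)
    fun z hz => hfpos z (hsub hz)

lemma rhoStar_le_mul_rhoBar (hlam : ∀ x ∈ Icc (0:ℝ) 1, 0 ≤ lam x) {K : ℝ} (hK : 0 ≤ K)
    (hμ : ∀ h m : Fin (2 ^ n), muHatDyadic f n h m ≤ K * muStarDyadic f n h m) :
    rhoStar f lam n ≤ K * rhoBar f lam n := by
  have ha : ∀ h : Fin (2 ^ n), 0 ≤ (2 ^ n : ℝ) * lamDyadic lam n h :=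
    fun h => mul_nonneg (by positivity) (lamDyadic_nonneg hlam h)
  refine sInf_le_mul_sInf hK ⟨0, ?_⟩ ⟨_, _, isStochastic_const_inv (by positivity), rfl⟩ ?_
  · rintro _ ⟨p, hp, rfl⟩
    exact maxLoad_nonneg ha (fun h m => (hp.1 h m).1) fun h m => (muStarDyadic_pos hf hfpos h m).le
  · rintro _ ⟨p, hp, rfl⟩
    exact ⟨_, ⟨p, hp, rfl⟩, maxLoad_le_mul_maxLoad hK ha (fun h m => (hp.1 h m).1)
      (muStarDyadic_pos hf hfpos) (muHatDyadic_pos hf hfpos) hμ⟩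

end Dyadic

theorem stmt15_general (f : ℝ × ℝ → ℝ)
    (hf : ContinuousOn f (Icc (0:ℝ) 1 ×ˢ Icc (0:ℝ) 1))
    (hfpos : ∀ z ∈ Icc (0:ℝ) 1 ×ˢ Icc (0:ℝ) 1, 0 < f z)
    (lam : ℝ → ℝ) (hlam : ∀ x ∈ Icc (0:ℝ) 1, 0 ≤ lam x)
    (rstar : ℝ) (h1 : rstar < 1)
    (hbar : ∀ n : ℕ, rhoBar f lam n ≤ rstar) :
    ∃ n : ℕ, rhoStar f lam n < 1 := by
  obtain ⟨K, hKr, hK1⟩ : ∃ K, K * rstar < 1 ∧ 1 < K := by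
    have hlim : Filter.Tendsto (fun K : ℝ => K * rstar) (nhdsWithin 1 (Ioi 1)) (nhds rstar) := by
      simpa using ((continuous_mul_const rstar).tendsto 1).mono_left nhdsWithin_le_nhds
    exact ((hlim.eventually (gt_mem_nhds h1)).and self_mem_nhdsWithin).exists
  obtain ⟨n, hn⟩ := (eventually_muHatDyadic_le_mul_muStarDyadic hf hfpos hK1).exists
  refine ⟨n, ?_⟩
  calc rhoStar f lam n ≤ K * rhoBar f lam n := rhoStar_le_mul_rhoBar hf hfpos hlam (by linarith) hn
    _ ≤ K * rstar := by gcongr; exact hbar n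
    _ < 1 := hKr

/-- Proposition C.1 (i), deterministic content: if for some
`ρ* ∈ (0,1)` every best-case dyadic load satisfies `ρ̄ⁿ ≤ ρ*`, then `ρⁿ < 1`
for some `n`. -/
theorem stmt15 (f : ℝ × ℝ → ℝ)
    (hf : ContinuousOn f (Icc (0:ℝ) 1 ×ˢ Icc (0:ℝ) 1))
    (hfpos : ∀ z ∈ Icc (0:ℝ) 1 ×ˢ Icc (0:ℝ) 1, 0 < f z)
    (lam : ℝ → ℝ) (hlam : ∀ x ∈ Icc (0:ℝ) 1, 0 ≤ lam x)
    (hint : IntegrableOn lam (Icc 0 1))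
    (rstar : ℝ) (h0 : 0 < rstar) (h1 : rstar < 1)
    (hbar : ∀ n : ℕ, rhoBar f lam n ≤ rstar) :
    ∃ n : ℕ, rhoStar f lam n < 1 :=
  stmt15_general f hf hfpos lam hlam rstar h1 hbar
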